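/- arXiv:1001.0206 — 2 statements merged into one kernel-verified Lean document; each statement's English description precedes it below -/
import Mathlib

section
/- For the single-jump filtration D generated by a random time τ and mark ζ (progressively), every D ∨ F-predictable process Y admits the decomposition Y_t = Y_t^0 1_{t ≤ τ} + Y_t^1(τ,ζ) 1_{τ < t}, where Y^0 is F-predictable and Y^1(θ,e) is a P(F) ⊗ B(ℝ≥0) ⊗ B(E)-measurable indexed process. -/
open MeasureTheory Set

/-- The predictable σ-algebra on `ℝ × Ω` associated to a family of σ-algebras `𝔾`:
the σ-algebra generated by left-continuous `𝔾`-adapted processes. -/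
def predictableSA {Ω : Type*} (𝔾 : ℝ → MeasurableSpace Ω) : MeasurableSpace (ℝ × Ω) :=
  ⨆ u : {u : ℝ → Ω → ℝ // (∀ t, Measurable[𝔾 t] (u t)) ∧
      ∀ ω t, ContinuousWithinAt (fun s => u s ω) (Iic t) t},
    MeasurableSpace.comap (fun p : ℝ × Ω => u.1 p.1 p.2) inferInstance

/-- The right-continuous filtration generated progressively by a random time `τ` and a mark
`ζ` revealed at `τ`:  `D_t = ∩_{ε>0} σ(ζ 1_{τ≤s}, 1_{τ≤s} : s ≤ t+ε)`. -/
def progSA {Ω M : Type*} [MeasurableSpace M] (τ : Ω → ℝ) (ζ : Ω → M) (t : ℝ) :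
    MeasurableSpace Ω :=
  ⨅ ε : {ε : ℝ // 0 < ε}, MeasurableSpace.generateFrom
    {s | ∃ u ≤ t + ε.1, s = {ω | τ ω ≤ u} ∨
        ∃ B, MeasurableSet B ∧ s = {ω | τ ω ≤ u ∧ ζ ω ∈ B}}

/-
The `G`-predictable σ-algebra is generated by left-continuous `G`-adapted processes `u`, and
`u t` is the limit of `u q_n` along grid times `q_n < s_n < t` tending to `t`. Because `D_q`
only sees `(τ, ζ)` up to any time after `q`, the variable `u q_n` is measurable for `F_{q_n}`
joined with the information of `(τ, ζ)` up to `s_n`: on `{s_n < τ}` it agrees with an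
`F_{q_n}`-measurable variable, and on `{τ ≤ s_n}` with a function of `(ω, τ, ζ)` measurable for
`F_{q_n} ⊗ B(ℝ × E)`. Gluing over the grid cells gives `F`-predictable approximations of `u`
valid on `{t ≤ τ}`, and `P(F) ⊗ B(ℝ × E)`-measurable ones valid on `{τ < t}`, where eventually
`τ ≤ s_n`. Both properties pass from the generators to every `G`-predictable `Y`, and
Doob–Dynkin yields `Y⁰` and `Y¹`.
-/

open Filter Topology

namespace MeasurableSpace

variable {α β : Type*} {D : Set α} {ρ : α → β} {m : MeasurableSpace β}

/-- The sets that agree on `D` with the preimage under `ρ` of an `m`-measurable set. -/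
def comapOn (D : Set α) (ρ : α → β) (m : MeasurableSpace β) : MeasurableSpace α :=
  (m.comap (ρ ∘ Subtype.val : D → β)).map Subtype.val

theorem measurableSet_comapOn {A : Set α} {A' : Set β} (hA' : MeasurableSet[m] A')
    (h : ∀ x ∈ D, x ∈ A ↔ ρ x ∈ A') : MeasurableSet[comapOn D ρ m] A :=
  ⟨A', hA', Set.ext fun x => (h x x.2).symm⟩

theorem measurable_comapOn_of_eqOn {g : α → ℝ} {g' : β → ℝ} (hg' : Measurable[m] g')
    (h : ∀ x ∈ D, g x = g' (ρ x)) : Measurable[comapOn D ρ m] g := fun _ hB =>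
  measurableSet_comapOn (hg' hB) fun x hx => by simp [h x hx]

theorem measurable_comapOn_of_tendsto {f : ℕ → α → ℝ} {g : α → ℝ}
    (hf : ∀ n, Measurable[comapOn D ρ m] (f n))
    (hlim : ∀ x ∈ D, Tendsto (fun n => f n x) atTop (𝓝 (g x))) :
    Measurable[comapOn D ρ m] g := by
  let _ : MeasurableSpace D := m.comap (ρ ∘ Subtype.val)
  have hfD : ∀ n, Measurable (f n ∘ Subtype.val : D → ℝ) := fun n _ hB => hf n hB
  exact fun _ hB => measurable_of_tendsto_metrizable (g := g ∘ Subtype.val) hfD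
    (tendsto_pi_nhds.2 fun x => hlim x x.2) hB

/-- Doob–Dynkin on `D`. -/
theorem _root_.Measurable.exists_eq_comp_of_comapOn {g : α → ℝ}
    (hg : Measurable[comapOn D ρ m] g) :
    ∃ g' : β → ℝ, Measurable[m] g' ∧ ∀ x ∈ D, g x = g' (ρ x) := by
  have hgD : Measurable[m.comap (ρ ∘ Subtype.val : D → β)] (g ∘ Subtype.val) :=
    fun _ hB => hg hB
  obtain ⟨g', hg', hcomp⟩ := hgD.exists_eq_measurable_comp
  exact ⟨g', hg', fun x hx => congrFun hcomp ⟨x, hx⟩⟩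

end MeasurableSpace

open MeasurableSpace

section Predictable

variable {Ω : Type*}

theorem measurable_predictableSA {𝔾 : ℝ → MeasurableSpace Ω} {u : ℝ → Ω → ℝ}
    (hu : ∀ t, Measurable[𝔾 t] (u t))
    (hleft : ∀ ω t, ContinuousWithinAt (fun s => u s ω) (Iic t) t) :
    Measurable[predictableSA 𝔾] fun p : ℝ × Ω => u p.1 p.2 :=
  Measurable.of_comap_le (le_iSup_of_le ⟨u, hu, hleft⟩ le_rfl)

theorem predictableSA_le {𝔾 : ℝ → MeasurableSpace Ω} {m : MeasurableSpace (ℝ × Ω)}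
    (h : ∀ u : ℝ → Ω → ℝ, (∀ t, Measurable[𝔾 t] (u t)) →
      (∀ ω t, ContinuousWithinAt (fun s => u s ω) (Iic t) t) →
      Measurable[m] fun p : ℝ × Ω => u p.1 p.2) :
    predictableSA 𝔾 ≤ m :=
  iSup_le fun u => (h u.1 u.2.1 u.2.2).comap_le

theorem eventually_nhdsLE_mem_Ioc_iff (a b t : ℝ) :
    ∀ᶠ s in 𝓝[≤] t, (s ∈ Ioc a b ↔ t ∈ Ioc a b) := by
  rcases le_or_gt t a with hta | hat
  · filter_upwards [self_mem_nhdsWithin] with s (hst : s ≤ t)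
    exact iff_of_false (fun hs => (hst.trans hta).not_gt hs.1) fun ht => hta.not_gt ht.1
  rcases le_or_gt t b with htb | hbt
  · filter_upwards [Ioc_mem_nhdsLE hat] with s hs
    exact iff_of_true ⟨hs.1, hs.2.trans htb⟩ ⟨hat, htb⟩
  · filter_upwards [Ioc_mem_nhdsLE hbt] with s hs
    exact iff_of_false (fun h => hs.1.not_ge h.2) fun h => hbt.not_ge h.2

theorem continuousWithinAt_Iic_indicator_Ioc (a b t c : ℝ) :
    ContinuousWithinAt ((Ioc a b).indicator fun _ => c) (Iic t) t := by
  refine continuousWithinAt_const.congr_of_eventuallyEq ?_ rfl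
  filter_upwards [eventually_nhdsLE_mem_Ioc_iff a b t] with s hs
  simp only [indicator_apply, hs]

variable {F : ℝ → MeasurableSpace Ω}

theorem measurableSet_predictableSA_Ioc_prod (hF : Monotone F) (a b : ℝ) {A : Set Ω}
    (hA : MeasurableSet[F a] A) : MeasurableSet[predictableSA F] (Ioc a b ×ˢ A) := by
  classical
  have hu : Measurable[predictableSA F] fun p : ℝ × Ω =>
      (Ioc a b).indicator (fun _ => A.indicator (1 : Ω → ℝ) p.2) p.1 := by
    refine measurable_predictableSA (u := fun t ω => (Ioc a b).indicator
      (fun _ => A.indicator (1 : Ω → ℝ) ω) t) (fun t => ?_) fun ω t =>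
      continuousWithinAt_Iic_indicator_Ioc a b t _
    by_cases ht : t ∈ Ioc a b
    · simpa only [indicator_of_mem ht] using
        (measurable_const.indicator (hF ht.1.le _ hA) : Measurable[F t] (A.indicator 1))
    · simpa only [indicator_of_notMem ht] using measurable_const
  convert hu (measurableSet_singleton 1) using 1
  ext ⟨t, ω⟩
  by_cases ht : t ∈ Ioc a b <;> by_cases hω : ω ∈ A <;> simp [ht, hω]

theorem measurableSet_predictableSA_prod_Ioc_inter {X : Type*} [MeasurableSpace X]
    (hF : Monotone F) (a b : ℝ) {A : Set (Ω × X)}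
    (hA : MeasurableSet[(F a).prod inferInstance] A) :
    MeasurableSet[(predictableSA F).prod inferInstance]
      ({q : (ℝ × Ω) × X | q.1.1 ∈ Ioc a b} ∩ (fun q => (q.1.2, q.2)) ⁻¹' A) := by
  let _ : MeasurableSpace (ℝ × Ω) := predictableSA F
  set C := {q : (ℝ × Ω) × X | q.1.1 ∈ Ioc a b}
  have hC : MeasurableSet C := by
    convert measurable_fst (measurableSet_predictableSA_Ioc_prod hF a b MeasurableSet.univ)
      using 1
    ext; simp [C]
  -- on the cell `C`, the `Ω`-coordinate only carries `F a`-information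
  have hφ : @Measurable C (Ω × X) _ ((F a).prod inferInstance)
      fun q => (q.1.1.2, q.1.2) := by
    refine @Measurable.prodMk _ _ _ _ (F a) _ _ _ (fun A0 hA0 => ?_)
      (measurable_snd.comp measurable_subtype_coe)
    refine ⟨(Ioc a b ×ˢ A0) ×ˢ univ,
      (measurableSet_predictableSA_Ioc_prod hF a b hA0).prod MeasurableSet.univ, ?_⟩
    ext ⟨q, hq⟩
    simp [show q.1.1 ∈ Ioc a b from hq]
  have := hC.subtype_image (hφ hA)
  rwa [show (fun q : C => ((q : (ℝ × Ω) × X).1.2, (q : (ℝ × Ω) × X).2)) ⁻¹' A =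
      Subtype.val ⁻¹' ((fun q => (q.1.2, q.2)) ⁻¹' A) from rfl,
    Subtype.image_preimage_coe] at this

end Predictable

section Grid

noncomputable def gridPoint (n : ℕ) (k : ℤ) : ℝ := k / (n + 1)

noncomputable def gridIndex (n : ℕ) (t : ℝ) : ℤ := ⌈t * (n + 1)⌉

theorem gridPoint_strictMono (n : ℕ) : StrictMono (gridPoint n) := fun _ _ hkl =>
  div_lt_div_of_pos_right (Int.cast_lt.2 hkl) (by positivity)

theorem gridIndex_eq_iff {n : ℕ} {t : ℝ} {k : ℤ} :
    gridIndex n t = k ↔ t ∈ Ioc (gridPoint n (k - 1)) (gridPoint n k) := by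
  have hn : (0 : ℝ) < n + 1 := by positivity
  rw [gridIndex, Int.ceil_eq_iff, mem_Ioc, gridPoint, gridPoint, div_lt_iff₀ hn, le_div_iff₀ hn]
  push_cast
  rfl

theorem gridPoint_gridIndex_sub_mem (n : ℕ) (t : ℝ) {j : ℤ} (hj : 0 < j) :
    gridPoint n (gridIndex n t - j) ∈ Ico (t - j / (n + 1)) t := by
  have hn : (0 : ℝ) < n + 1 := by positivity
  have hj' : (1 : ℝ) ≤ j := by exact_mod_cast hj
  have hceil := Int.ceil_lt_add_one (t * (n + 1))
  have hceil' := Int.le_ceil (t * (n + 1))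
  rw [mem_Ico, gridPoint, gridIndex, div_lt_iff₀ hn, sub_div' hn.ne',
    div_le_div_iff_of_pos_right hn]
  push_cast
  constructor <;> linarith

theorem tendsto_gridPoint_gridIndex_sub (t : ℝ) {j : ℤ} (hj : 0 < j) :
    Tendsto (fun n => gridPoint n (gridIndex n t - j)) atTop (𝓝[<] t) := by
  have hlow : Tendsto (fun n : ℕ => t - j / ((n : ℝ) + 1)) atTop (𝓝 t) := by
    simpa using tendsto_const_nhds.sub
      ((tendsto_const_div_atTop_nhds_zero_nat (j : ℝ)).comp (tendsto_add_atTop_nat 1))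
  refine tendsto_nhdsWithin_iff.2 ⟨tendsto_of_tendsto_of_tendsto_of_le_of_le hlow
    tendsto_const_nhds (fun n => (gridPoint_gridIndex_sub_mem n t hj).1)
    (fun n => (gridPoint_gridIndex_sub_mem n t hj).2.le), Eventually.of_forall fun n => ?_⟩
  exact (gridPoint_gridIndex_sub_mem n t hj).2

theorem ContinuousWithinAt.tendsto_gridPoint {f : ℝ → ℝ} {t : ℝ}
    (hf : ContinuousWithinAt f (Iic t) t) {j : ℤ} (hj : 0 < j) :
    Tendsto (fun n => f (gridPoint n (gridIndex n t - j))) atTop (𝓝 (f t)) :=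
  hf.tendsto.comp (tendsto_nhdsWithin_mono_right Iio_subset_Iic_self
    (tendsto_gridPoint_gridIndex_sub t hj))

variable {Ω : Type*} {F : ℝ → MeasurableSpace Ω}

theorem measurable_predictableSA_gridIndex (hF : Monotone F) (n : ℕ) {g : ℤ → Ω → ℝ}
    (hg : ∀ k, Measurable[F (gridPoint n (k - 1))] (g k)) :
    Measurable[predictableSA F] fun p : ℝ × Ω => g (gridIndex n p.1) p.2 := by
  intro B hB
  have hcells : (fun p : ℝ × Ω => g (gridIndex n p.1) p.2) ⁻¹' B =
      ⋃ k, Ioc (gridPoint n (k - 1)) (gridPoint n k) ×ˢ (g k ⁻¹' B) := by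
    ext ⟨t, ω⟩
    simp only [mem_preimage, mem_iUnion, mem_prod, ← gridIndex_eq_iff, exists_eq_left']
  rw [hcells]
  exact MeasurableSet.iUnion fun k => measurableSet_predictableSA_Ioc_prod hF _ _ (hg k hB)

theorem measurable_predictableSA_prod_gridIndex {X : Type*} [MeasurableSpace X]
    (hF : Monotone F) (n : ℕ) {g : ℤ → Ω × X → ℝ}
    (hg : ∀ k, Measurable[(F (gridPoint n (k - 1))).prod inferInstance] (g k)) :
    Measurable[(predictableSA F).prod inferInstance]
      fun q : (ℝ × Ω) × X => g (gridIndex n q.1.1) (q.1.2, q.2) := by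
  intro B hB
  have hcells : (fun q : (ℝ × Ω) × X => g (gridIndex n q.1.1) (q.1.2, q.2)) ⁻¹' B =
      ⋃ k, {q : (ℝ × Ω) × X | q.1.1 ∈ Ioc (gridPoint n (k - 1)) (gridPoint n k)} ∩
        (fun q => (q.1.2, q.2)) ⁻¹' (g k ⁻¹' B) := by
    ext q
    simp only [mem_preimage, mem_iUnion, mem_inter_iff, mem_ofPred_eq, ← gridIndex_eq_iff,
      exists_eq_left']
  rw [hcells]
  exact MeasurableSet.iUnion fun k =>
    measurableSet_predictableSA_prod_Ioc_inter hF _ _ (hg k hB)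

end Grid

section Jump

variable {Ω E : Type*} [MeasurableSpace E] (τ : Ω → ℝ) (ζ : Ω → E)

/-- `σ(ζ 1_{τ ≤ u}, 1_{τ ≤ u} : u ≤ s)`, the information of `(τ, ζ)` up to time `s`. -/
def rawProgSA (s : ℝ) : MeasurableSpace Ω :=
  MeasurableSpace.generateFrom
    {A | ∃ u ≤ s, A = {ω | τ ω ≤ u} ∨ ∃ B, MeasurableSet B ∧ A = {ω | τ ω ≤ u ∧ ζ ω ∈ B}}

theorem progSA_le_rawProgSA {t s : ℝ} (hts : t < s) : progSA τ ζ t ≤ rawProgSA τ ζ s := by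
  refine (iInf_le _ ⟨s - t, sub_pos.2 hts⟩).trans_eq ?_
  simp only [add_sub_cancel]
  rfl

theorem sup_rawProgSA_le_comapOn_id (m : MeasurableSpace Ω) (s : ℝ) :
    m ⊔ rawProgSA τ ζ s ≤ comapOn {ω | s < τ ω} id m := by
  refine sup_le (fun A hA => measurableSet_comapOn hA fun _ _ => Iff.rfl) ?_
  refine generateFrom_le ?_
  rintro A ⟨u, hus, rfl | ⟨B, -, rfl⟩⟩ <;>
    refine measurableSet_comapOn (MeasurableSet.empty : MeasurableSet[m] ∅) fun ω hω => ?_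
  · exact iff_of_false (fun h => (h.trans hus).not_gt hω) id
  · exact iff_of_false (fun h => (h.1.trans hus).not_gt hω) id

theorem sup_rawProgSA_le_comapOn_mark (m : MeasurableSpace Ω) (s : ℝ) :
    m ⊔ rawProgSA τ ζ s ≤
      comapOn {ω | τ ω ≤ s} (fun ω => (ω, τ ω, ζ ω)) (m.prod inferInstance) := by
  let _ := m
  refine sup_le (fun A hA => measurableSet_comapOn (measurable_fst hA) fun _ _ => Iff.rfl) ?_
  refine generateFrom_le ?_
  rintro A ⟨u, -, rfl | ⟨B, hB, rfl⟩⟩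
  · exact measurableSet_comapOn (measurable_snd.fst measurableSet_Iic) fun _ _ => Iff.rfl
  · exact measurableSet_comapOn ((measurable_snd.fst measurableSet_Iic).inter
      (measurable_snd.snd hB)) fun _ _ => Iff.rfl

variable {τ ζ} {F 𝔾 : ℝ → MeasurableSpace Ω} (hF : Monotone F)
  (h𝔾 : ∀ t, 𝔾 t = F t ⊔ progSA τ ζ t) {u : ℝ → Ω → ℝ} (hu : ∀ t, Measurable[𝔾 t] (u t))
  (hleft : ∀ ω t, ContinuousWithinAt (fun s => u s ω) (Iic t) t)
include h𝔾 hu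

theorem measurable_sup_rawProgSA {q s : ℝ} (hqs : q < s) :
    Measurable[F q ⊔ rawProgSA τ ζ s] (u q) :=
  (hu q).mono (h𝔾 q ▸ sup_le_sup_left (progSA_le_rawProgSA τ ζ hqs) _) le_rfl

include hF hleft

theorem measurable_comapOn_preJump :
    Measurable[comapOn {p : ℝ × Ω | p.1 ≤ τ p.2} id (predictableSA F)]
      fun p : ℝ × Ω => u p.1 p.2 := by
  have hdec (n : ℕ) (k : ℤ) : ∃ g : Ω → ℝ, Measurable[F (gridPoint n (k - 2))] g ∧
      ∀ ω, gridPoint n (k - 1) < τ ω → u (gridPoint n (k - 2)) ω = g ω :=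
    ((measurable_sup_rawProgSA h𝔾 hu (gridPoint_strictMono n (by omega))).mono
      (sup_rawProgSA_le_comapOn_id τ ζ _ _) le_rfl).exists_eq_comp_of_comapOn
  choose g hg hug using hdec
  refine measurable_comapOn_of_tendsto (f := fun n p => g n (gridIndex n p.1) p.2)
    (fun n => measurable_comapOn_of_eqOn (measurable_predictableSA_gridIndex hF n fun k =>
      (hg n k).mono (hF ((gridPoint_strictMono n).monotone (by omega))) le_rfl)
      fun _ _ => rfl) ?_
  rintro ⟨t, ω⟩ (ht : t ≤ τ ω)
  exact ((hleft ω t).tendsto_gridPoint two_pos).congr fun n =>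
    hug n _ ω ((gridPoint_gridIndex_sub_mem n t one_pos).2.trans_le ht)

theorem measurable_comapOn_postJump :
    Measurable[comapOn {p : ℝ × Ω | τ p.2 < p.1} (fun p => (p, τ p.2, ζ p.2))
      ((predictableSA F).prod inferInstance)] fun p : ℝ × Ω => u p.1 p.2 := by
  have hdec (n : ℕ) (k : ℤ) : ∃ g : Ω × ℝ × E → ℝ,
      Measurable[(F (gridPoint n (k - 2))).prod inferInstance] g ∧
      ∀ ω, τ ω ≤ gridPoint n (k - 1) → u (gridPoint n (k - 2)) ω = g (ω, τ ω, ζ ω) :=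
    ((measurable_sup_rawProgSA h𝔾 hu (gridPoint_strictMono n (by omega))).mono
      (sup_rawProgSA_le_comapOn_mark τ ζ _ _) le_rfl).exists_eq_comp_of_comapOn
  choose g hg hug using hdec
  refine measurable_comapOn_of_tendsto
    (f := fun n p => g n (gridIndex n p.1) (p.2, τ p.2, ζ p.2))
    (fun n => measurable_comapOn_of_eqOn (measurable_predictableSA_prod_gridIndex hF n fun k =>
      (hg n k).mono (sup_le_sup_right (MeasurableSpace.comap_mono
        (hF ((gridPoint_strictMono n).monotone (by omega)))) _) le_rfl)
      fun _ _ => rfl) ?_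
  rintro ⟨t, ω⟩ (ht : τ ω < t)
  have hjumped : ∀ᶠ n in atTop, τ ω ≤ gridPoint n (gridIndex n t - 1) :=
    (((tendsto_gridPoint_gridIndex_sub t one_pos).mono_right nhdsWithin_le_nhds).eventually_const_lt
      ht).mono fun _ => le_of_lt
  exact ((hleft ω t).tendsto_gridPoint two_pos).congr' (hjumped.mono fun n => hug n _ ω)

end Jump

theorem predictable_decomposition_single_time_general
    {Ω E : Type*} [MeasurableSpace Ω] [MeasurableSpace E]
    (F : ℝ → MeasurableSpace Ω) (hFmono : Monotone F)
    (τ : Ω → ℝ) (ζ : Ω → E)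
    (𝔾 : ℝ → MeasurableSpace Ω) (h𝔾 : ∀ t, 𝔾 t = F t ⊔ progSA τ ζ t)
    (Y : ℝ → Ω → ℝ)
    (hY : @Measurable (ℝ × Ω) ℝ (predictableSA 𝔾) _ fun p => Y p.1 p.2) :
    ∃ (Y0 : ℝ → Ω → ℝ) (Y1 : ℝ → ℝ → E → Ω → ℝ),
      (@Measurable (ℝ × Ω) ℝ (predictableSA F) _ fun p => Y0 p.1 p.2) ∧
      (@Measurable ((ℝ × Ω) × ℝ × E) ℝ
        ((predictableSA F).prod inferInstance) _
        fun q => Y1 q.1.1 q.2.1 q.2.2 q.1.2) ∧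
      ∀ t ω, Y t ω = if t ≤ τ ω then Y0 t ω else Y1 t (τ ω) (ζ ω) ω := by
  obtain ⟨Y0, hY0, hYY0⟩ := (hY.mono (predictableSA_le fun _ hu hleft =>
    measurable_comapOn_preJump hFmono h𝔾 hu hleft) le_rfl).exists_eq_comp_of_comapOn
  obtain ⟨Y1, hY1, hYY1⟩ := (hY.mono (predictableSA_le fun _ hu hleft =>
    measurable_comapOn_postJump hFmono h𝔾 hu hleft) le_rfl).exists_eq_comp_of_comapOn
  refine ⟨fun t ω => Y0 (t, ω), fun t θ e ω => Y1 ((t, ω), θ, e), hY0, hY1, fun t ω => ?_⟩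
  split_ifs with h
  · exact hYY0 (t, ω) h
  · exact hYY1 (t, ω) (not_le.mp h)

/-- every `G = F ∨ D`-predictable process `Y` decomposes as
`Y_t = Y_t^0 1_{t ≤ τ} + Y_t^1(τ,ζ) 1_{τ < t}` with `Y^0` `F`-predictable and `Y^1` an
indexed `P(F) ⊗ B(ℝ≥0) ⊗ B(E)`-measurable process. -/
theorem predictable_decomposition_single_time
    {Ω E : Type*} [MeasurableSpace Ω] [MeasurableSpace E]
    (F : ℝ → MeasurableSpace Ω) (hFmono : Monotone F)
    (hF : ∀ t, F t ≤ ‹MeasurableSpace Ω›)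
    (τ : Ω → ℝ) (hτ0 : ∀ ω, 0 ≤ τ ω) (ζ : Ω → E)
    (𝔾 : ℝ → MeasurableSpace Ω) (h𝔾 : ∀ t, 𝔾 t = F t ⊔ progSA τ ζ t)
    (Y : ℝ → Ω → ℝ)
    (hY : @Measurable (ℝ × Ω) ℝ (predictableSA 𝔾) _ fun p => Y p.1 p.2) :
    ∃ (Y0 : ℝ → Ω → ℝ) (Y1 : ℝ → ℝ → E → Ω → ℝ),
      (@Measurable (ℝ × Ω) ℝ (predictableSA F) _ fun p => Y0 p.1 p.2) ∧
      (@Measurable ((ℝ × Ω) × ℝ × E) ℝ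
        ((predictableSA F).prod inferInstance) _
        fun q => Y1 q.1.1 q.2.1 q.2.2 q.1.2) ∧
      ∀ t ω, Y t ω = if t ≤ τ ω then Y0 t ω else Y1 t (τ ω) (ζ ω) ω :=
  predictable_decomposition_single_time_general F hFmono τ ζ 𝔾 h𝔾 Y hY
end

section
/- Consistency of ranked-times reduction: let τ_1, τ_2 be random times with marks ζ_1, ζ_2 and let (τ̂_1, τ̂_2) = (τ_1∧τ_2, τ_1∨τ_2) be the ranked times and ι ∈ {1,2} the index achieving the minimum (with a measurable tie-breaking rule). Then the progressive enlargement of F by the successive times (τ̂_1, τ̂_2) together with the enriched marks (ι, ζ_ι) and (3−ι, ζ_{3−ι}) coincides with the progressive enlargement G = F ∨ D^1 ∨ D^2 by the two original times and marks. -/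
/-!
The σ-algebra generated by the events `{τ ≤ u, ζ ∈ B}`, `u ≤ r`, consists of sets whose trace on
`{τ ≤ r}` is again of this form at level `r` and which are constant on `{τ > r}`. Both properties
survive the right limit `r ↓ t`, so `progSA τ ζ t` is already generated at level `t`, and the
claim becomes an identity of generated σ-algebras at a fixed level. There, every event of the
ranked pair is a union of events of the original pairs cut along `{τ₂ < τ₁}`, which is measurable
by separating the two times by a rational, and conversely the index component of the enriched
marks tells which original time an event of the ranked pair belongs to.
-/

open MeasureTheory Set

open MeasurableSpace

section progSAAt

variable {Ω M : Type*} [MeasurableSpace M] {τ : Ω → ℝ} {ζ : Ω → M} {r u : ℝ} {C : Set Ω}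

variable (τ ζ r) in
def progSAAt : MeasurableSpace Ω :=
  generateFrom {s | ∃ u ≤ r, s = {ω | τ ω ≤ u} ∨
    ∃ B, MeasurableSet B ∧ s = {ω | τ ω ≤ u ∧ ζ ω ∈ B}}

theorem measurableSet_progSAAt_le (hu : u ≤ r) :
    MeasurableSet[progSAAt τ ζ r] {ω | τ ω ≤ u} :=
  measurableSet_generateFrom ⟨u, hu, Or.inl rfl⟩

theorem measurableSet_progSAAt_le_mem (hu : u ≤ r) {B : Set M} (hB : MeasurableSet B) :
    MeasurableSet[progSAAt τ ζ r] {ω | τ ω ≤ u ∧ ζ ω ∈ B} :=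
  measurableSet_generateFrom ⟨u, hu, Or.inr ⟨B, hB, rfl⟩⟩

theorem progSAAt_le_iff {m : MeasurableSpace Ω} :
    progSAAt τ ζ r ≤ m ↔
      ∀ u ≤ r, ∀ B : Set M, MeasurableSet B → MeasurableSet[m] {ω | τ ω ≤ u ∧ ζ ω ∈ B} := by
  refine ⟨fun h u hu B hB => h _ (measurableSet_progSAAt_le_mem hu hB), fun h => ?_⟩
  refine generateFrom_le ?_
  rintro _ ⟨u, hu, rfl | ⟨B, hB, rfl⟩⟩
  · simpa using h u hu univ .univ
  · exact h u hu B hB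

theorem MeasurableSet.inter_progSAAt_le (hC : MeasurableSet[progSAAt τ ζ r] C) (s : ℝ) :
    MeasurableSet[progSAAt τ ζ s] (C ∩ {ω | τ ω ≤ s}) := by
  induction C, hC using generateFrom_induction with
  | hC C hC =>
    obtain ⟨u, -, rfl | ⟨B, hB, rfl⟩⟩ := hC
    · convert measurableSet_progSAAt_le (ζ := ζ) (min_le_right u s) using 1
      ext ω
      simp only [mem_inter_iff, mem_ofPred_eq, le_min_iff]
    · convert measurableSet_progSAAt_le_mem (min_le_right u s) hB using 1
      ext ω
      simp only [mem_inter_iff, mem_ofPred_eq, le_min_iff]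
      tauto
  | empty => simp only [empty_inter]; exact @MeasurableSet.empty _ (progSAAt τ ζ s)
  | compl C _ ih =>
    rw [inter_comm, ← sdiff_eq, ← sdiff_inter_self_eq_sdiff]
    exact (measurableSet_progSAAt_le le_rfl).diff ih
  | iUnion C _ ih =>
    rw [iUnion_inter]
    exact .iUnion ih

theorem MeasurableSet.mem_iff_of_lt_progSAAt (hC : MeasurableSet[progSAAt τ ζ r] C)
    {ω ω' : Ω} (hω : r < τ ω) (hω' : r < τ ω') : ω ∈ C ↔ ω' ∈ C := by
  induction C, hC using generateFrom_induction with
  | hC C hC =>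
    obtain ⟨u, hu, rfl | ⟨B, hB, rfl⟩⟩ := hC
    · exact iff_of_false (fun h => hω.not_ge (h.trans hu)) fun h => hω'.not_ge (h.trans hu)
    · exact iff_of_false (fun h => hω.not_ge (h.1.trans hu)) fun h => hω'.not_ge (h.1.trans hu)
  | empty => simp
  | compl C _ ih => exact not_congr ih
  | iUnion C _ ih => simp only [mem_iUnion, ih]

theorem measurableSet_progSAAt_of_mem_iff
    (hle : MeasurableSet[progSAAt τ ζ r] (C ∩ {ω | τ ω ≤ r}))
    (hlt : ∀ ω ω', r < τ ω → r < τ ω' → (ω ∈ C ↔ ω' ∈ C)) :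
    MeasurableSet[progSAAt τ ζ r] C := by
  by_cases hC : ∃ ω ∈ C, r < τ ω
  · obtain ⟨ω, hωC, hω⟩ := hC
    convert hle.union (measurableSet_progSAAt_le (ζ := ζ) le_rfl).compl using 1
    ext ω'
    by_cases hω' : τ ω' ≤ r
    · simp [hω']
    · simpa [hω'] using (hlt ω ω' hω (not_le.mp hω')).mp hωC
  · convert hle using 1
    refine (inter_eq_left.mpr fun ω hω => ?_).symm
    by_contra hω'
    exact hC ⟨ω, hω, not_le.mp hω'⟩

theorem progSA_eq_progSAAt (τ : Ω → ℝ) (ζ : Ω → M) (t : ℝ) : progSA τ ζ t = progSAAt τ ζ t := by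
  refine le_antisymm (fun C hC => ?_) (le_iInf fun ε => generateFrom_mono ?_)
  · have hC : ∀ ε > 0, MeasurableSet[progSAAt τ ζ (t + ε)] C := fun ε hε =>
      measurableSet_iInf.mp hC ⟨ε, hε⟩
    refine measurableSet_progSAAt_of_mem_iff ((hC 1 one_pos).inter_progSAAt_le t)
      fun ω ω' hω hω' => ?_
    -- both points lie beyond `t + ε` for this `ε`
    have hε : 0 < (min (τ ω) (τ ω') - t) / 2 := by
      have := lt_min hω hω'
      linarith
    refine (hC _ hε).mem_iff_of_lt_progSAAt ?_ ?_ <;>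
      linarith [min_le_left (τ ω) (τ ω'), min_le_right (τ ω) (τ ω')]
  · rintro _ ⟨u, hu, h⟩
    exact ⟨u, hu.trans (by linarith [ε.2]), h⟩

end progSAAt

section ranked

variable {Ω M₁ M₂ E : Type*} [MeasurableSpace M₁] [MeasurableSpace M₂] [MeasurableSpace E]
  {m : MeasurableSpace Ω} {τ₁ τ₂ : Ω → ℝ} {t u : ℝ}

theorem measurableSet_lt_and_le {ζ₁ : Ω → M₁} {ζ₂ : Ω → M₂} (h₁ : progSAAt τ₁ ζ₁ t ≤ m)
    (h₂ : progSAAt τ₂ ζ₂ t ≤ m) (hu : u ≤ t) :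
    MeasurableSet[m] {ω | τ₂ ω < τ₁ ω ∧ τ₂ ω ≤ u} := by
  have hτ₁ : ∀ v ≤ t, MeasurableSet[m] {ω | τ₁ ω ≤ v} := fun v hv =>
    h₁ _ (measurableSet_progSAAt_le hv)
  have hτ₂ : ∀ v ≤ t, MeasurableSet[m] {ω | τ₂ ω ≤ v} := fun v hv =>
    h₂ _ (measurableSet_progSAAt_le hv)
  have hunion : {ω | τ₂ ω < τ₁ ω ∧ τ₂ ω ≤ u} = ({ω | τ₂ ω ≤ u} \ {ω | τ₁ ω ≤ u}) ∪
      ⋃ q : {q : ℚ // (q : ℝ) ≤ u}, {ω | τ₂ ω ≤ q} \ {ω | τ₁ ω ≤ q} := by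
    ext ω
    simp only [mem_ofPred_eq, mem_union, mem_sdiff, mem_iUnion, not_le]
    constructor
    · rintro ⟨hlt, hle⟩
      by_cases h : u < τ₁ ω
      · exact Or.inl ⟨hle, h⟩
      · obtain ⟨q, hq₂, hq₁⟩ := exists_rat_btwn hlt
        exact Or.inr ⟨⟨q, hq₁.le.trans (not_lt.mp h)⟩, hq₂.le, hq₁⟩
    · rintro (⟨hle, hlt⟩ | ⟨q, hle, hlt⟩)
      · exact ⟨hle.trans_lt hlt, hle⟩
      · exact ⟨hle.trans_lt hlt, hle.trans q.2⟩
  rw [hunion]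
  exact ((hτ₂ u hu).diff (hτ₁ u hu)).union <| .iUnion fun q =>
    (hτ₂ q (q.2.trans hu)).diff (hτ₁ q (q.2.trans hu))

variable (τ₁ τ₂) in
noncomputable def firstMark (ζ₁ ζ₂ : Ω → E) (ω : Ω) : Fin 2 × E :=
  if τ₁ ω ≤ τ₂ ω then (0, ζ₁ ω) else (1, ζ₂ ω)

variable (τ₁ τ₂) in
noncomputable def secondMark (ζ₁ ζ₂ : Ω → E) (ω : Ω) : Fin 2 × E :=
  if τ₁ ω ≤ τ₂ ω then (1, ζ₂ ω) else (0, ζ₁ ω)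

variable {ζ₁ ζ₂ : Ω → E}

theorem progSAAt_min_le (h₁ : progSAAt τ₁ ζ₁ t ≤ m) (h₂ : progSAAt τ₂ ζ₂ t ≤ m) :
    progSAAt (fun ω => min (τ₁ ω) (τ₂ ω)) (firstMark τ₁ τ₂ ζ₁ ζ₂) t ≤ m := by
  refine progSAAt_le_iff.mpr fun u hu B hB => ?_
  have hS := measurableSet_lt_and_le h₁ h₂ hu
  have hunion : {ω | min (τ₁ ω) (τ₂ ω) ≤ u ∧ firstMark τ₁ τ₂ ζ₁ ζ₂ ω ∈ B} =
      {ω | τ₁ ω ≤ u ∧ ζ₁ ω ∈ Prod.mk 0 ⁻¹' B} \ {ω | τ₂ ω < τ₁ ω ∧ τ₂ ω ≤ u} ∪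
      {ω | τ₂ ω ≤ u ∧ ζ₂ ω ∈ Prod.mk 1 ⁻¹' B} ∩ {ω | τ₂ ω < τ₁ ω ∧ τ₂ ω ≤ u} := by
    ext ω
    by_cases hc : τ₁ ω ≤ τ₂ ω <;> simp [firstMark, hc] <;> grind
  rw [hunion]
  exact ((h₁ _ (measurableSet_progSAAt_le_mem hu (measurable_prodMk_left hB))).diff hS).union
    ((h₂ _ (measurableSet_progSAAt_le_mem hu (measurable_prodMk_left hB))).inter hS)

theorem progSAAt_max_le (h₁ : progSAAt τ₁ ζ₁ t ≤ m) (h₂ : progSAAt τ₂ ζ₂ t ≤ m) :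
    progSAAt (fun ω => max (τ₁ ω) (τ₂ ω)) (secondMark τ₁ τ₂ ζ₁ ζ₂) t ≤ m := by
  refine progSAAt_le_iff.mpr fun u hu B hB => ?_
  have hS := measurableSet_lt_and_le h₁ h₂ hu
  have hunion : {ω | max (τ₁ ω) (τ₂ ω) ≤ u ∧ secondMark τ₁ τ₂ ζ₁ ζ₂ ω ∈ B} =
      ({ω | τ₂ ω ≤ u ∧ ζ₂ ω ∈ Prod.mk 1 ⁻¹' B} ∩ {ω | τ₁ ω ≤ u}) \ {ω | τ₂ ω < τ₁ ω ∧ τ₂ ω ≤ u} ∪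
      {ω | τ₁ ω ≤ u ∧ ζ₁ ω ∈ Prod.mk 0 ⁻¹' B} ∩ {ω | τ₂ ω < τ₁ ω ∧ τ₂ ω ≤ u} := by
    ext ω
    by_cases hc : τ₁ ω ≤ τ₂ ω <;> simp [secondMark, hc] <;> grind
  rw [hunion]
  exact (((h₂ _ (measurableSet_progSAAt_le_mem hu (measurable_prodMk_left hB))).inter
      (h₁ _ (measurableSet_progSAAt_le hu))).diff hS).union
    ((h₁ _ (measurableSet_progSAAt_le_mem hu (measurable_prodMk_left hB))).inter hS)

theorem progSAAt_le_of_ranked_left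
    (h₁ : progSAAt (fun ω => min (τ₁ ω) (τ₂ ω)) (firstMark τ₁ τ₂ ζ₁ ζ₂) t ≤ m)
    (h₂ : progSAAt (fun ω => max (τ₁ ω) (τ₂ ω)) (secondMark τ₁ τ₂ ζ₁ ζ₂) t ≤ m) :
    progSAAt τ₁ ζ₁ t ≤ m := by
  refine progSAAt_le_iff.mpr fun u hu B hB => ?_
  have hB' : MeasurableSet ({0} ×ˢ B : Set (Fin 2 × E)) := .prod (.singleton _) hB
  have hunion : {ω | τ₁ ω ≤ u ∧ ζ₁ ω ∈ B} =
      {ω | min (τ₁ ω) (τ₂ ω) ≤ u ∧ firstMark τ₁ τ₂ ζ₁ ζ₂ ω ∈ {0} ×ˢ B} ∪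
      {ω | max (τ₁ ω) (τ₂ ω) ≤ u ∧ secondMark τ₁ τ₂ ζ₁ ζ₂ ω ∈ {0} ×ˢ B} := by
    ext ω
    by_cases hc : τ₁ ω ≤ τ₂ ω <;> simp [firstMark, secondMark, hc] <;> grind
  rw [hunion]
  exact (h₁ _ (measurableSet_progSAAt_le_mem hu hB')).union
    (h₂ _ (measurableSet_progSAAt_le_mem hu hB'))

theorem progSAAt_le_of_ranked_right
    (h₁ : progSAAt (fun ω => min (τ₁ ω) (τ₂ ω)) (firstMark τ₁ τ₂ ζ₁ ζ₂) t ≤ m)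
    (h₂ : progSAAt (fun ω => max (τ₁ ω) (τ₂ ω)) (secondMark τ₁ τ₂ ζ₁ ζ₂) t ≤ m) :
    progSAAt τ₂ ζ₂ t ≤ m := by
  refine progSAAt_le_iff.mpr fun u hu B hB => ?_
  have hB' : MeasurableSet ({1} ×ˢ B : Set (Fin 2 × E)) := .prod (.singleton _) hB
  have hunion : {ω | τ₂ ω ≤ u ∧ ζ₂ ω ∈ B} =
      {ω | min (τ₁ ω) (τ₂ ω) ≤ u ∧ firstMark τ₁ τ₂ ζ₁ ζ₂ ω ∈ {1} ×ˢ B} ∪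
      {ω | max (τ₁ ω) (τ₂ ω) ≤ u ∧ secondMark τ₁ τ₂ ζ₁ ζ₂ ω ∈ {1} ×ˢ B} := by
    ext ω
    by_cases hc : τ₁ ω ≤ τ₂ ω <;> simp [firstMark, secondMark, hc] <;> grind
  rw [hunion]
  exact (h₁ _ (measurableSet_progSAAt_le_mem hu hB')).union
    (h₂ _ (measurableSet_progSAAt_le_mem hu hB'))

theorem progSAAt_min_sup_max :
    progSAAt (fun ω => min (τ₁ ω) (τ₂ ω)) (firstMark τ₁ τ₂ ζ₁ ζ₂) t ⊔
        progSAAt (fun ω => max (τ₁ ω) (τ₂ ω)) (secondMark τ₁ τ₂ ζ₁ ζ₂) t =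
      progSAAt τ₁ ζ₁ t ⊔ progSAAt τ₂ ζ₂ t :=
  le_antisymm (sup_le (progSAAt_min_le le_sup_left le_sup_right)
      (progSAAt_max_le le_sup_left le_sup_right))
    (sup_le (progSAAt_le_of_ranked_left le_sup_left le_sup_right)
      (progSAAt_le_of_ranked_right le_sup_left le_sup_right))

end ranked

theorem ranked_times_reduction_filtration_eq_general
    {Ω E : Type*} [MeasurableSpace E]
    (F : ℝ → MeasurableSpace Ω)
    (τ₁ τ₂ : Ω → ℝ)
    (ζ₁ ζ₂ : Ω → E)
    -- ranked times
    (τh₁ τh₂ : Ω → ℝ)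
    (hτh₁ : ∀ ω, τh₁ ω = min (τ₁ ω) (τ₂ ω))
    (hτh₂ : ∀ ω, τh₂ ω = max (τ₁ ω) (τ₂ ω))
    -- index of the first time to occur, with measurable tie-breaking rule
    (ι : Ω → Fin 2) (hι : ∀ ω, ι ω = if τ₁ ω ≤ τ₂ ω then 0 else 1)
    -- enriched marks
    (ξ₁ ξ₂ : Ω → Fin 2 × E)
    (hξ₁ : ∀ ω, ξ₁ ω = (ι ω, if τ₁ ω ≤ τ₂ ω then ζ₁ ω else ζ₂ ω))
    (hξ₂ : ∀ ω, ξ₂ ω = (1 - ι ω, if τ₁ ω ≤ τ₂ ω then ζ₂ ω else ζ₁ ω)) :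
    ∀ t : ℝ,
      F t ⊔ progSA τh₁ ξ₁ t ⊔ progSA τh₂ ξ₂ t
        = F t ⊔ progSA τ₁ ζ₁ t ⊔ progSA τ₂ ζ₂ t := by
  intro t
  obtain rfl : τh₁ = fun ω => min (τ₁ ω) (τ₂ ω) := funext hτh₁
  obtain rfl : τh₂ = fun ω => max (τ₁ ω) (τ₂ ω) := funext hτh₂
  obtain rfl : ξ₁ = firstMark τ₁ τ₂ ζ₁ ζ₂ := funext fun ω => by
    rw [hξ₁, hι, firstMark]; split_ifs <;> rfl
  obtain rfl : ξ₂ = secondMark τ₁ τ₂ ζ₁ ζ₂ := funext fun ω => by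
    rw [hξ₂, hι, secondMark]; split_ifs <;> rfl
  simp only [progSA_eq_progSAAt, sup_assoc, progSAAt_min_sup_max]

/-- consistency of the ranked-times reduction.  Let `τ̂_1 = τ_1 ∧ τ_2`,
`τ̂_2 = τ_1 ∨ τ_2` be the ranked times and `ι` the index achieving the minimum (tie-break:
`ι = 1` when `τ_1 ≤ τ_2`).  The progressive enlargement of `F` by the successive times
`(τ̂_1, τ̂_2)` with the enriched marks `(ι, ζ_ι)` and `(3−ι, ζ_{3−ι})` (valued in
`Fin 2 × E`) coincides with `G = F ∨ D^1 ∨ D^2`. -/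
theorem ranked_times_reduction_filtration_eq
    {Ω E : Type*} [MeasurableSpace Ω] [MeasurableSpace E]
    (F : ℝ → MeasurableSpace Ω) (hFmono : Monotone F)
    (hF : ∀ t, F t ≤ ‹MeasurableSpace Ω›)
    (τ₁ τ₂ : Ω → ℝ) (hτ₁ : Measurable τ₁) (hτ₂ : Measurable τ₂)
    (hτ₁0 : ∀ ω, 0 ≤ τ₁ ω) (hτ₂0 : ∀ ω, 0 ≤ τ₂ ω)
    (ζ₁ ζ₂ : Ω → E) (hζ₁ : Measurable ζ₁) (hζ₂ : Measurable ζ₂)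
    -- ranked times
    (τh₁ τh₂ : Ω → ℝ)
    (hτh₁ : ∀ ω, τh₁ ω = min (τ₁ ω) (τ₂ ω))
    (hτh₂ : ∀ ω, τh₂ ω = max (τ₁ ω) (τ₂ ω))
    -- index of the first time to occur, with measurable tie-breaking rule
    (ι : Ω → Fin 2) (hι : ∀ ω, ι ω = if τ₁ ω ≤ τ₂ ω then 0 else 1)
    -- enriched marks
    (ξ₁ ξ₂ : Ω → Fin 2 × E)
    (hξ₁ : ∀ ω, ξ₁ ω = (ι ω, if τ₁ ω ≤ τ₂ ω then ζ₁ ω else ζ₂ ω))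
    (hξ₂ : ∀ ω, ξ₂ ω = (1 - ι ω, if τ₁ ω ≤ τ₂ ω then ζ₂ ω else ζ₁ ω)) :
    ∀ t : ℝ,
      F t ⊔ progSA τh₁ ξ₁ t ⊔ progSA τh₂ ξ₂ t
        = F t ⊔ progSA τ₁ ζ₁ t ⊔ progSA τ₂ ζ₂ t :=
  ranked_times_reduction_filtration_eq_general F τ₁ τ₂ ζ₁ ζ₂ τh₁ τh₂ hτh₁ hτh₂ ι hι ξ₁ ξ₂ hξ₁ hξ₂
end
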